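/- Let λ, λ' ∈ ℝᴹ be probability vectors (nonnegative entries summing to 1), p ∈ ℝᴹ with entries in [p_min, 1] where p_min > 0, and η ∈ [0,1]. Define l = ⟨λ, p⟩, l' = ⟨(1−η)λ + ηλ', p⟩. Then ‖λ'' / l' − λ / l‖₁ ≤ 2η / p_min², where λ'' = (1−η)λ + ηλ'. -/
import Mathlib


theorem stmt_11 {M : ℕ} (lam lam' p : Fin M → ℝ) (pmin η : ℝ) (hpmin : 0 < pmin)
    (hlam_nonneg : ∀ i, 0 ≤ lam i) (hlam_sum : ∑ i, lam i = 1)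
    (hlam'_nonneg : ∀ i, 0 ≤ lam' i) (hlam'_sum : ∑ i, lam' i = 1)
    (hp : ∀ i, p i ∈ Set.Icc pmin 1) (hη : η ∈ Set.Icc (0:ℝ) 1) :
    ∑ i, |((1 - η) * lam i + η * lam' i) / (∑ j, ((1 - η) * lam j + η * lam' j) * p j)
          - lam i / (∑ j, lam j * p j)| ≤ 2 * η / pmin ^ 2 := by
  obtain ⟨hη0, hη1⟩ := hη
  set l : ℝ := ∑ j, lam j * p j with hl
  set s : ℝ := ∑ j, lam' j * p j with hs
  have hl2 : (∑ j, ((1 - η) * lam j + η * lam' j) * p j) = (1 - η) * l + η * s := by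
    simp [hl, hs, Finset.mul_sum, Finset.sum_add_distrib, add_mul, mul_assoc]
  have hll : pmin ≤ l := by
    calc pmin = ∑ j, lam j * pmin := by
          rw [← Finset.sum_mul, hlam_sum, one_mul]
      _ ≤ l := Finset.sum_le_sum fun j _ =>
          mul_le_mul_of_nonneg_left (hp j).1 (hlam_nonneg j)
  have hlu : l ≤ 1 := by
    calc l ≤ ∑ j, lam j * 1 := Finset.sum_le_sum fun j _ =>
          mul_le_mul_of_nonneg_left (hp j).2 (hlam_nonneg j)
      _ = 1 := by rw [← Finset.sum_mul, hlam_sum, one_mul]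
  have hsl : pmin ≤ s := by
    calc pmin = ∑ j, lam' j * pmin := by
          rw [← Finset.sum_mul, hlam'_sum, one_mul]
      _ ≤ s := Finset.sum_le_sum fun j _ =>
          mul_le_mul_of_nonneg_left (hp j).1 (hlam'_nonneg j)
  have hsu : s ≤ 1 := by
    calc s ≤ ∑ j, lam' j * 1 := Finset.sum_le_sum fun j _ =>
          mul_le_mul_of_nonneg_left (hp j).2 (hlam'_nonneg j)
      _ = 1 := by rw [← Finset.sum_mul, hlam'_sum, one_mul]
  have hlpos : 0 < l := lt_of_lt_of_le hpmin hll
  have hspos : 0 < s := lt_of_lt_of_le hpmin hsl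
  have hl'pos : 0 < (1 - η) * l + η * s := by nlinarith
  have hl'l : pmin ≤ (1 - η) * l + η * s := by nlinarith
  rw [hl2]
  have key : ∀ i, |((1 - η) * lam i + η * lam' i) / ((1 - η) * l + η * s) - lam i / l|
      ≤ η * (lam' i * l + lam i * s) / pmin ^ 2 := by
    intro i
    have hnum : ((1 - η) * lam i + η * lam' i) * l - ((1 - η) * l + η * s) * lam i
        = η * (lam' i * l - lam i * s) := by ring
    rw [div_sub_div _ _ (ne_of_gt hl'pos) (ne_of_gt hlpos), hnum]
    rw [abs_div, abs_of_pos (by positivity : (0:ℝ) < ((1 - η) * l + η * s) * l)]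
    apply div_le_div₀ (mul_nonneg hη0
      (add_nonneg (mul_nonneg (hlam'_nonneg i) hlpos.le) (mul_nonneg (hlam_nonneg i) hspos.le)))
    · rw [abs_mul, abs_of_nonneg hη0]
      have : |lam' i * l - lam i * s| ≤ lam' i * l + lam i * s := by
        have h1 : 0 ≤ lam' i * l := mul_nonneg (hlam'_nonneg i) hlpos.le
        have h2 : 0 ≤ lam i * s := mul_nonneg (hlam_nonneg i) hspos.le
        rw [abs_sub_le_iff]; constructor <;> linarith
      exact mul_le_mul_of_nonneg_left this hη0
    · positivity
    · nlinarith
  calc ∑ i, |((1 - η) * lam i + η * lam' i) / ((1 - η) * l + η * s) - lam i / l|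
      ≤ ∑ i, η * (lam' i * l + lam i * s) / pmin ^ 2 :=
        Finset.sum_le_sum fun i _ => key i
    _ = η * (l + s) / pmin ^ 2 := by
        rw [← Finset.sum_div, ← Finset.mul_sum, Finset.sum_add_distrib,
          ← Finset.sum_mul, ← Finset.sum_mul, hlam_sum, hlam'_sum]
        ring_nf
    _ ≤ 2 * η / pmin ^ 2 := by
        apply div_le_div_of_nonneg_right ?_ (by positivity)
        nlinarith
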